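/- The set {z = (α, β, M) ∈ Z : |α| < r, |β| < s, ‖M₀(z)‖_n < G(z)} is a convex subset of Z. -/

import Mathlib

open Matrix

noncomputable section

/-- Vectors in ℝ³. -/
abbrev V3 := Fin 3 → ℝ
/-- 3×3 real matrices. -/
abbrev Mat3 := Matrix (Fin 3) (Fin 3) ℝ
/-- The state space Z = ℝ³ × ℝ³ × ℝ^{3×3}. -/
abbrev Z := V3 × V3 × Mat3

/-- Euclidean dot product on ℝ³. -/
def dot3 (u v : V3) : ℝ := ∑ i, u i * v i
/-- Euclidean norm on ℝ³. -/
def norm3 (v : V3) : ℝ := Real.sqrt (dot3 v v)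
/-- Outer (tensor) product u ⊗ v. -/
def outer (u v : V3) : Mat3 := Matrix.vecMulVec u v

/-- The constraint set K_{r,s}. -/
def Krs (r s p : ℝ) : Set Z :=
  {z | z.2.2 = outer z.1 z.2.1 + p • (1 : Mat3) ∧ norm3 z.1 = r ∧ norm3 z.2.1 = s}

/-- The wave cone Λ. -/
def waveCone : Set Z :=
  {z | ∃ (ξ : V3) (c : ℝ), ξ ≠ 0 ∧ z.2.2 *ᵥ ξ + c • z.1 = 0 ∧
    z.2.2ᵀ *ᵥ ξ + c • z.2.1 = 0 ∧ dot3 z.1 ξ = 0 ∧ dot3 z.2.1 ξ = 0}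

/-- M₀(z) = α⊗β − M + p·Id. -/
def M0 (p : ℝ) (z : Z) : Mat3 := outer z.1 z.2.1 - z.2.2 + p • (1 : Mat3)

/-- G(z) = √((r² − |α|²)(s² − |β|²)). -/
def Gfun (r s : ℝ) (z : Z) : ℝ :=
  Real.sqrt ((r ^ 2 - norm3 z.1 ^ 2) * (s ^ 2 - norm3 z.2.1 ^ 2))

/-- Iterated lamination sets K_{r,s}^{Λ,i}. -/
def lamSet (r s p : ℝ) : ℕ → Set Z
  | 0 => Krs r s p
  | (i + 1) => {z | ∃ zb ∈ waveCone, ∃ t₁ t₂ : ℝ, t₁ ≤ 0 ∧ 0 ≤ t₂ ∧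
      z + t₁ • zb ∈ lamSet r s p i ∧ z + t₂ • zb ∈ lamSet r s p i}

/-- Nuclear norm: trace of the PSD square root of AᵀA. -/
def nuclearNorm (A : Mat3) : ℝ :=
  (((Matrix.posSemidef_conjTranspose_mul_self A).1.eigenvectorUnitary : Mat3) *
    Matrix.diagonal (((↑) : ℝ → ℝ) ∘ (√·) ∘ (Matrix.posSemidef_conjTranspose_mul_self A).1.eigenvalues) *
    (star (Matrix.posSemidef_conjTranspose_mul_self A).1.eigenvectorUnitary : Mat3)).trace

/-- f₀(A) = (A₂₃, A₃₁, A₁₂) (0-indexed: (A 1 2, A 2 0, A 0 1)). -/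
def f0 (A : Mat3) : V3 := ![A 1 2, A 2 0, A 0 1]

/-- Frobenius norm of a matrix. -/
def frobNorm (A : Mat3) : ℝ := Real.sqrt (∑ i, ∑ j, A i j ^ 2)

/-- Λ-convexity of a set. -/
def LambdaConvex (S : Set Z) : Prop :=
  ∀ z₁ ∈ S, ∀ z₂ ∈ S, z₁ - z₂ ∈ waveCone →
    ∀ t : ℝ, t ∈ Set.Icc (0 : ℝ) 1 → z₁ + t • (z₂ - z₁) ∈ S

/-- The Λ-convex hull of K_{r,s}: the intersection of all Λ-convex sets containing it. -/
def lambdaHull (r s p : ℝ) : Set Z := ⋂₀ {S : Set Z | LambdaConvex S ∧ Krs r s p ⊆ S}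

namespace NNaux


lemma dot3_self_nonneg (v : V3) : 0 ≤ dot3 v v :=
  Finset.sum_nonneg fun i _ => mul_self_nonneg _

lemma sq_norm3 (v : V3) : norm3 v ^ 2 = dot3 v v := Real.sq_sqrt (dot3_self_nonneg v)

lemma norm3_eq_one (v : V3) (h : dot3 v v = 1) : norm3 v = 1 := by
  rw [norm3, h, Real.sqrt_one]

lemma dot3_le (u v : V3) : dot3 u v ≤ norm3 u * norm3 v := by
  refine (le_abs_self _).trans ?_
  rw [← Real.sqrt_sq_eq_abs, norm3, norm3, ← Real.sqrt_mul (dot3_self_nonneg u)]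
  apply Real.sqrt_le_sqrt
  have h := Finset.sum_mul_sq_le_sq_mul_sq Finset.univ u v
  simpa [dot3, sq] using h

lemma dot3_self_eq_zero {v : V3} (h : dot3 v v = 0) : v = 0 := by
  funext i
  have := (Finset.sum_eq_zero_iff_of_nonneg (fun i _ => mul_self_nonneg (v i))).mp h i (Finset.mem_univ i)
  have := mul_self_eq_zero.mp this
  simpa using this

lemma conj_diag (Q M P : Mat3) (i : Fin 3) :
    (Qᴴ * M * P) i i = dot3 (fun j => Q j i) (M *ᵥ (fun j => P j i)) := by
  simp only [Matrix.mul_apply, Matrix.conjTranspose_apply, Matrix.mulVec, dotProduct,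
    dot3, star_trivial, Finset.sum_mul, Finset.mul_sum]
  rw [Finset.sum_comm]
  exact Finset.sum_congr rfl fun j _ => Finset.sum_congr rfl fun k _ => by ring

lemma dot3_mulVec (M : Mat3) (x y : V3) : dot3 x (M *ᵥ y) = dot3 (Mᴴ *ᵥ x) y := by
  simp only [dot3, Matrix.mulVec, dotProduct, Matrix.conjTranspose_apply, star_trivial,
    Finset.mul_sum, Finset.sum_mul]
  rw [Finset.sum_comm]
  exact Finset.sum_congr rfl fun j _ => Finset.sum_congr rfl fun k _ => by ring

lemma nuclearNorm_eq_sum (A : Mat3) :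
    nuclearNorm A = ∑ i, Real.sqrt ((Matrix.posSemidef_conjTranspose_mul_self A).1.eigenvalues i) := by
  set hH := Matrix.posSemidef_conjTranspose_mul_self A
  rw [nuclearNorm, Matrix.trace_mul_cycle]
  rw [show (star hH.1.eigenvectorUnitary.1 : Mat3) * hH.1.eigenvectorUnitary.1 = 1 from
    Matrix.UnitaryGroup.star_mul_self _]
  simp [Matrix.trace_diagonal]


lemma dot3_comm (u v : V3) : dot3 u v = dot3 v u := by
  simp [dot3, mul_comm]

lemma dot3_smul_left (c : ℝ) (w y : V3) : dot3 (c • w) y = c * dot3 w y := by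
  simp [dot3, Finset.mul_sum, mul_assoc]

lemma dot3_inner (x y : EuclideanSpace ℝ (Fin 3)) :
    dot3 x.ofLp y.ofLp = inner ℝ x y := by
  simp [dot3, PiLp.inner_apply, RCLike.inner_apply, mul_comm]

lemma trace_eq_sum_dot3 (M : Mat3) {P : Mat3} (h2 : P * Pᴴ = 1) :
    M.trace = ∑ i, dot3 (fun j => P j i) (M *ᵥ (fun j => P j i)) := by
  have h : M.trace = (Pᴴ * M * P).trace := by
    rw [Matrix.trace_mul_cycle, h2, Matrix.one_mul]
  rw [h, Matrix.trace]
  exact Finset.sum_congr rfl fun i _ => conj_diag P M P i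

lemma eigen_dot3 (A : Mat3) (i : Fin 3) :
    dot3 (A *ᵥ ⇑((Matrix.posSemidef_conjTranspose_mul_self A).1.eigenvectorBasis i))
         (A *ᵥ ⇑((Matrix.posSemidef_conjTranspose_mul_self A).1.eigenvectorBasis i))
      = (Matrix.posSemidef_conjTranspose_mul_self A).1.eigenvalues i := by
  set hE := (Matrix.posSemidef_conjTranspose_mul_self A).1 with hEdef
  have h1 : dot3 ⇑(hE.eigenvectorBasis i) ⇑(hE.eigenvectorBasis i) = 1 := by
    rw [dot3_inner (hE.eigenvectorBasis i) (hE.eigenvectorBasis i)]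
    rw [real_inner_self_eq_norm_sq, hE.eigenvectorBasis.orthonormal.1 i, one_pow]
  rw [dot3_mulVec, Matrix.mulVec_mulVec, hE.mulVec_eigenvectorBasis i, dot3_smul_left]
  rw [h1, mul_one]

lemma dot3_basis_self (A : Mat3) (i : Fin 3) :
    dot3 ⇑((Matrix.posSemidef_conjTranspose_mul_self A).1.eigenvectorBasis i)
         ⇑((Matrix.posSemidef_conjTranspose_mul_self A).1.eigenvectorBasis i) = 1 := by
  set hE := (Matrix.posSemidef_conjTranspose_mul_self A).1
  rw [dot3_inner (hE.eigenvectorBasis i) (hE.eigenvectorBasis i)]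
  rw [real_inner_self_eq_norm_sq, hE.eigenvectorBasis.orthonormal.1 i, one_pow]

lemma trace_mul_le_nuclearNorm (A U : Mat3) (hU : U ∈ Matrix.unitaryGroup (Fin 3) ℝ) :
    Matrix.trace (A * U) ≤ nuclearNorm A := by
  set hH := Matrix.posSemidef_conjTranspose_mul_self A with hHdef
  set hE := hH.1 with hEdef
  set P : Mat3 := (Matrix.IsHermitian.eigenvectorUnitary hE : Mat3) with hPdef
  have hP2 : P * Pᴴ = 1 := by
    rw [← Matrix.star_eq_conjTranspose]
    exact Matrix.mem_unitaryGroup_iff.mp (Matrix.IsHermitian.eigenvectorUnitary hE).2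
  have hUU : U * Uᴴ = 1 := by
    rw [← Matrix.star_eq_conjTranspose]
    exact Matrix.mem_unitaryGroup_iff.mp hU
  have hcol : ∀ i : Fin 3, (fun j => P j i) = ⇑(hE.eigenvectorBasis i) := fun i =>
    funext fun j => Matrix.IsHermitian.eigenvectorUnitary_apply hE j i
  rw [Matrix.trace_mul_comm, trace_eq_sum_dot3 (U * A) hP2, nuclearNorm_eq_sum]
  apply Finset.sum_le_sum
  intro i _
  rw [hcol i, ← Matrix.mulVec_mulVec, dot3_mulVec]
  have hnu : norm3 (Uᴴ *ᵥ ⇑(hE.eigenvectorBasis i)) = 1 := by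
    apply norm3_eq_one
    rw [← dot3_mulVec, Matrix.mulVec_mulVec, hUU, Matrix.one_mulVec, dot3_basis_self]
  have hna : norm3 (A *ᵥ ⇑(hE.eigenvectorBasis i)) = Real.sqrt (hE.eigenvalues i) := by
    rw [norm3, eigen_dot3]
  calc dot3 (Uᴴ *ᵥ ⇑(hE.eigenvectorBasis i)) (A *ᵥ ⇑(hE.eigenvectorBasis i))
      ≤ norm3 (Uᴴ *ᵥ ⇑(hE.eigenvectorBasis i)) * norm3 (A *ᵥ ⇑(hE.eigenvectorBasis i)) :=
        dot3_le _ _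
    _ = Real.sqrt (hE.eigenvalues i) := by rw [hnu, hna, one_mul]

lemma dot3_basis (A : Mat3) (i j : Fin 3) :
    dot3 ⇑((Matrix.posSemidef_conjTranspose_mul_self A).1.eigenvectorBasis i)
         ⇑((Matrix.posSemidef_conjTranspose_mul_self A).1.eigenvectorBasis j)
      = if i = j then 1 else 0 := by
  set hE := (Matrix.posSemidef_conjTranspose_mul_self A).1
  rw [dot3_inner (hE.eigenvectorBasis i) (hE.eigenvectorBasis j)]
  exact orthonormal_iff_ite.mp hE.eigenvectorBasis.orthonormal i j

lemma dot3_Avec (A : Mat3) (i j : Fin 3) :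
    dot3 (A *ᵥ ⇑((Matrix.posSemidef_conjTranspose_mul_self A).1.eigenvectorBasis i))
         (A *ᵥ ⇑((Matrix.posSemidef_conjTranspose_mul_self A).1.eigenvectorBasis j))
      = if i = j then (Matrix.posSemidef_conjTranspose_mul_self A).1.eigenvalues i else 0 := by
  set hE := (Matrix.posSemidef_conjTranspose_mul_self A).1
  rw [dot3_comm, dot3_mulVec, Matrix.mulVec_mulVec, hE.mulVec_eigenvectorBasis j,
    dot3_smul_left, dot3_basis]
  by_cases h : i = j
  · subst h; simp
  · simp [h, Ne.symm h]

lemma exists_unitary_trace_eq (A : Mat3) :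
    ∃ U ∈ Matrix.unitaryGroup (Fin 3) ℝ, (A * U).trace = nuclearNorm A := by
  classical
  set hH := Matrix.posSemidef_conjTranspose_mul_self A with hHdef
  set hE := hH.1 with hEdef
  set e := WithLp.equiv 2 (Fin 3 → ℝ) with hedef
  have hdnn : ∀ i, 0 ≤ hE.eigenvalues i := fun i => hH.eigenvalues_nonneg i
  set u : Fin 3 → EuclideanSpace ℝ (Fin 3) := fun i =>
    (Real.sqrt (hE.eigenvalues i))⁻¹ • e.symm (A *ᵥ ⇑(hE.eigenvectorBasis i)) with hudef
  set s : Set (Fin 3) := {i | hE.eigenvalues i ≠ 0} with hsdef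
  have hinner : ∀ i j : Fin 3, (inner ℝ (u i) (u j) : ℝ) =
      (Real.sqrt (hE.eigenvalues i))⁻¹ * ((Real.sqrt (hE.eigenvalues j))⁻¹ *
        (if i = j then hE.eigenvalues i else 0)) := by
    intro i j
    rw [hudef]
    simp only [real_inner_smul_left, real_inner_smul_right]
    have hx : (inner ℝ (e.symm (A *ᵥ ⇑(hE.eigenvectorBasis i)))
        (e.symm (A *ᵥ ⇑(hE.eigenvectorBasis j))) : ℝ) = if i = j then hE.eigenvalues i else 0 := by
      rw [← dot3_Avec A i j, ← dot3_inner]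
      rfl
    rw [hx]
    ring
  have horth : Orthonormal ℝ (s.restrict u) := by
    rw [orthonormal_iff_ite]
    rintro ⟨i, hi⟩ ⟨j, hj⟩
    change (inner ℝ (u i) (u j) : ℝ) = _
    rw [hinner i j]
    by_cases h : i = j
    · subst h
      simp only [if_pos rfl, Subtype.mk.injEq, if_pos rfl]
      have hdi : hE.eigenvalues i ≠ 0 := hi
      have hs : Real.sqrt (hE.eigenvalues i) ≠ 0 := by
        rw [ne_eq, Real.sqrt_eq_zero (hdnn i)]
        exact hdi
      have hds : Real.sqrt (hE.eigenvalues i) * Real.sqrt (hE.eigenvalues i) = hE.eigenvalues i :=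
        Real.mul_self_sqrt (hdnn i)
      rw [← hds]
      field_simp
      simp [Real.sqrt_sq_eq_abs, sq_abs]
    · have : (⟨i, hi⟩ : s) ≠ ⟨j, hj⟩ := by simpa [Subtype.ext_iff] using h
      rw [if_neg h, if_neg this]
      ring
  obtain ⟨b, hb⟩ := horth.exists_orthonormalBasis_extension_of_card_eq (by simp)
  set P : Mat3 := (Matrix.IsHermitian.eigenvectorUnitary hE : Mat3) with hPdef
  have hP1 : Pᴴ * P = 1 := by
    rw [← Matrix.star_eq_conjTranspose]
    exact Matrix.mem_unitaryGroup_iff'.mp (Matrix.IsHermitian.eigenvectorUnitary hE).2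
  set W : Mat3 := Matrix.of (fun j i => (e (b i)) j) with hWdef
  have hWcol : ∀ i : Fin 3, (fun j => W j i) = ⇑(b i) := fun i => rfl
  have hW1 : Wᴴ * W = 1 := by
    ext i k
    simp only [Matrix.mul_apply, Matrix.conjTranspose_apply, Matrix.one_apply, hWdef,
      Matrix.of_apply, star_trivial]
    have : ∑ j, (e (b i)) j * (e (b k)) j = dot3 (b i).ofLp (b k).ofLp := rfl
    rw [this, dot3_inner, orthonormal_iff_ite.mp b.orthonormal i k]
  refine ⟨P * Wᴴ, ?_, ?_⟩
  · rw [Matrix.mem_unitaryGroup_iff', Matrix.star_eq_conjTranspose, Matrix.conjTranspose_mul,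
      Matrix.conjTranspose_conjTranspose]
    calc W * Pᴴ * (P * Wᴴ) = W * (Pᴴ * P) * Wᴴ := by
          rw [Matrix.mul_assoc, Matrix.mul_assoc, Matrix.mul_assoc]
      _ = W * Wᴴ := by rw [hP1, Matrix.mul_one]
      _ = 1 := by rw [mul_eq_one_comm.mp hW1]
  · rw [← Matrix.mul_assoc, Matrix.trace_mul_comm, nuclearNorm_eq_sum]
    rw [Matrix.trace]
    apply Finset.sum_congr rfl
    intro i _
    have hdiag : (Wᴴ * (A * P)) i i = dot3 (fun j => W j i) (A *ᵥ (fun j => P j i)) := by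
      rw [← Matrix.mul_assoc]
      exact conj_diag W A P i
    rw [Matrix.diag_apply, hdiag, hWcol i]
    have hPcol : (fun j => P j i) = ⇑(hE.eigenvectorBasis i) := funext fun j =>
      Matrix.IsHermitian.eigenvectorUnitary_apply hE j i
    rw [hPcol]
    by_cases hdi : hE.eigenvalues i = 0
    · have hz : A *ᵥ ⇑(hE.eigenvectorBasis i) = 0 := by
        apply dot3_self_eq_zero
        rw [eigen_dot3, ← hEdef, hdi]
      rw [hz, hdi, Real.sqrt_zero]
      simp [dot3]
    · have hbi : b i = u i := hb i hdi
      have hs : Real.sqrt (hE.eigenvalues i) ≠ 0 := by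
        rw [ne_eq, Real.sqrt_eq_zero (hdnn i)]
        exact hdi
      rw [hbi, hudef]
      have hcoe : WithLp.ofLp ((Real.sqrt (hE.eigenvalues i))⁻¹ • e.symm (A *ᵥ ⇑(hE.eigenvectorBasis i)))
          = (Real.sqrt (hE.eigenvalues i))⁻¹ • (A *ᵥ ⇑(hE.eigenvectorBasis i)) := by
        rfl
      show dot3 (WithLp.ofLp ((Real.sqrt (hE.eigenvalues i))⁻¹ • e.symm (A *ᵥ ⇑(hE.eigenvectorBasis i)))) _ = _
      rw [hcoe, dot3_smul_left, eigen_dot3, ← hEdef]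
      have hds : Real.sqrt (hE.eigenvalues i) * Real.sqrt (hE.eigenvalues i) = hE.eigenvalues i :=
        Real.mul_self_sqrt (hdnn i)
      rw [← hds]
      field_simp
      simp [Real.sqrt_sq_eq_abs, sq_abs]

lemma nuclearNorm_add_le (B C : Mat3) :
    nuclearNorm (B + C) ≤ nuclearNorm B + nuclearNorm C := by
  obtain ⟨U, hU, hEq⟩ := exists_unitary_trace_eq (B + C)
  rw [← hEq, Matrix.add_mul, Matrix.trace_add]
  exact add_le_add (trace_mul_le_nuclearNorm B U hU) (trace_mul_le_nuclearNorm C U hU)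

lemma nuclearNorm_smul (c : ℝ) (hc : 0 ≤ c) (A : Mat3) :
    nuclearNorm (c • A) = c * nuclearNorm A := by
  obtain ⟨U, hU, hEq⟩ := exists_unitary_trace_eq (c • A)
  obtain ⟨V, hV, hEq'⟩ := exists_unitary_trace_eq A
  apply le_antisymm
  · rw [← hEq, Matrix.smul_mul, Matrix.trace_smul, smul_eq_mul]
    exact mul_le_mul_of_nonneg_left (trace_mul_le_nuclearNorm A U hU) hc
  · rw [← hEq', ← smul_eq_mul, ← Matrix.trace_smul, ← Matrix.smul_mul]
    exact trace_mul_le_nuclearNorm (c • A) V hV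

lemma nuclearNorm_zero : nuclearNorm 0 = 0 := by
  have h := nuclearNorm_smul 0 le_rfl 0
  rw [zero_smul] at h
  rw [h, zero_mul]

lemma norm3_zero : norm3 0 = 0 := by
  simp [norm3, dot3]

lemma vecMulVec_hermitian (v : V3) : (Matrix.vecMulVec v v).IsHermitian := by
  show (Matrix.vecMulVec v v)ᴴ = Matrix.vecMulVec v v
  ext i j
  simp [Matrix.conjTranspose_apply, Matrix.vecMulVec_apply, mul_comm]

lemma vecMulVec_mulVec (v x : V3) : Matrix.vecMulVec v v *ᵥ x = (dot3 v x) • v := by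
  funext i
  simp only [Matrix.mulVec, Matrix.vecMulVec_apply, dotProduct, dot3, Pi.smul_apply,
    smul_eq_mul, Finset.sum_mul, Finset.mul_sum]
  apply Finset.sum_congr rfl
  intro k _
  ring

lemma nuclearNorm_outer (u v : V3) :
    nuclearNorm (Matrix.vecMulVec u v) = norm3 u * norm3 v := by
  by_cases hv : v = 0
  · subst hv
    have h0 : Matrix.vecMulVec u (0 : V3) = 0 := by
      ext i j; simp [Matrix.vecMulVec_apply]
    rw [h0, nuclearNorm_zero, norm3_zero, mul_zero]
  · have hvv : 0 < dot3 v v := by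
      rcases lt_or_eq_of_le (dot3_self_nonneg v) with h | h
      · exact h
      · exact absurd (dot3_self_eq_zero h.symm) hv
    apply le_antisymm
    · obtain ⟨U, hU, hEq⟩ := exists_unitary_trace_eq (Matrix.vecMulVec u v)
      have hUU : U * Uᴴ = 1 := by
        rw [← Matrix.star_eq_conjTranspose]
        exact Matrix.mem_unitaryGroup_iff.mp hU
      have htr : (Matrix.vecMulVec u v * U).trace = dot3 u (Uᴴ *ᵥ v) := by
        simp only [Matrix.trace, Matrix.diag, Matrix.mul_apply, Matrix.vecMulVec_apply, dot3,
          Matrix.mulVec, dotProduct, Matrix.conjTranspose_apply, star_trivial, Finset.mul_sum]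
        exact Finset.sum_congr rfl fun i _ => Finset.sum_congr rfl fun k _ => by ring
      have hn : norm3 (Uᴴ *ᵥ v) = norm3 v := by
        rw [norm3, norm3, ← dot3_mulVec, Matrix.mulVec_mulVec, hUU, Matrix.one_mulVec]
      rw [← hEq, htr, ← hn]
      exact dot3_le _ _
    · have hev := (Matrix.posSemidef_conjTranspose_mul_self (Matrix.vecMulVec u v)).1.trace_eq_sum_eigenvalues
      have hvvA : (Matrix.vecMulVec u v)ᴴ * Matrix.vecMulVec u v
          = (dot3 u u) • Matrix.vecMulVec v v := by
        ext i j
        simp only [Matrix.mul_apply, Matrix.conjTranspose_apply, Matrix.vecMulVec_apply,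
          Matrix.smul_apply, smul_eq_mul, dot3, star_trivial, Finset.sum_mul, Finset.mul_sum]
        apply Finset.sum_congr rfl
        intro k _
        ring
      have htr : (Matrix.vecMulVec v v).trace = dot3 v v := by
        simp [Matrix.trace, Matrix.diag, Matrix.vecMulVec_apply, dot3]
      have hev2 : dot3 u u * dot3 v v = (Matrix.posSemidef_conjTranspose_mul_self (Matrix.vecMulVec u v)).1.eigenvalues 0 + (Matrix.posSemidef_conjTranspose_mul_self (Matrix.vecMulVec u v)).1.eigenvalues 1 + (Matrix.posSemidef_conjTranspose_mul_self (Matrix.vecMulVec u v)).1.eigenvalues 2 := by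
        calc dot3 u u * dot3 v v = (dot3 u u • Matrix.vecMulVec v v).trace := by
              rw [Matrix.trace_smul, htr, smul_eq_mul]
          _ = ((Matrix.vecMulVec u v)ᴴ * Matrix.vecMulVec u v).trace := by rw [hvvA]
          _ = _ := hev.trans ((Fin.sum_univ_three _).trans rfl)
      have h0 := (Matrix.posSemidef_conjTranspose_mul_self (Matrix.vecMulVec u v)).eigenvalues_nonneg 0
      have h1 := (Matrix.posSemidef_conjTranspose_mul_self (Matrix.vecMulVec u v)).eigenvalues_nonneg 1
      have h2 := (Matrix.posSemidef_conjTranspose_mul_self (Matrix.vecMulVec u v)).eigenvalues_nonneg 2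
      rw [nuclearNorm_eq_sum, Fin.sum_univ_three, norm3, norm3,
        ← Real.sqrt_mul (dot3_self_nonneg u), hev2, Real.sqrt_le_left (by positivity)]
      nlinarith [Real.sq_sqrt h0, Real.sq_sqrt h1, Real.sq_sqrt h2,
        mul_nonneg (Real.sqrt_nonneg ((Matrix.posSemidef_conjTranspose_mul_self (Matrix.vecMulVec u v)).1.eigenvalues 0)) (Real.sqrt_nonneg ((Matrix.posSemidef_conjTranspose_mul_self (Matrix.vecMulVec u v)).1.eigenvalues 1)),
        mul_nonneg (Real.sqrt_nonneg ((Matrix.posSemidef_conjTranspose_mul_self (Matrix.vecMulVec u v)).1.eigenvalues 0)) (Real.sqrt_nonneg ((Matrix.posSemidef_conjTranspose_mul_self (Matrix.vecMulVec u v)).1.eigenvalues 2)),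
        mul_nonneg (Real.sqrt_nonneg ((Matrix.posSemidef_conjTranspose_mul_self (Matrix.vecMulVec u v)).1.eigenvalues 1)) (Real.sqrt_nonneg ((Matrix.posSemidef_conjTranspose_mul_self (Matrix.vecMulVec u v)).1.eigenvalues 2))]

lemma dot3_combo (a b : ℝ) (hab : a + b = 1) (u v : V3) :
    dot3 (a • u + b • v) (a • u + b • v)
      = a * dot3 u u + b * dot3 v v - a * b * dot3 (v - u) (v - u) := by
  have hb : b = 1 - a := by linarith
  subst hb
  simp only [dot3, Pi.add_apply, Pi.smul_apply, Pi.sub_apply, smul_eq_mul, Finset.mul_sum,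
    ← Finset.sum_sub_distrib, ← Finset.sum_add_distrib]
  apply Finset.sum_congr rfl
  intro i _
  ring

lemma M0_combo (p a b : ℝ) (hab : a + b = 1) (x y : Z) :
    M0 p (a • x + b • y) = a • M0 p x + b • M0 p y
      + (a * b) • outer (y.1 - x.1) (x.2.1 - y.2.1) := by
  have hb : b = 1 - a := by linarith
  subst hb
  ext i j
  simp only [M0, outer, Matrix.vecMulVec_apply, Matrix.add_apply, Matrix.sub_apply,
    Matrix.smul_apply, Prod.fst_add, Prod.snd_add, Prod.smul_fst, Prod.smul_snd,
    Pi.add_apply, Pi.smul_apply, Pi.sub_apply, smul_eq_mul]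
  ring

lemma smul_sqrt_mul (c x y : ℝ) (hc : 0 ≤ c) : c * Real.sqrt (x * y) = Real.sqrt ((c*x) * (c*y)) := by
  rw [show (c*x) * (c*y) = c^2 * (x*y) by ring, Real.sqrt_mul (sq_nonneg c), Real.sqrt_sq hc]

lemma sqrt_cs3 (x1 x2 x3 y1 y2 y3 : ℝ) (hx1 : 0 ≤ x1) (hx2 : 0 ≤ x2) (hx3 : 0 ≤ x3)
    (hy1 : 0 ≤ y1) (hy2 : 0 ≤ y2) (hy3 : 0 ≤ y3) :
    Real.sqrt (x1*y1) + Real.sqrt (x2*y2) + Real.sqrt (x3*y3)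
      ≤ Real.sqrt ((x1+x2+x3) * (y1+y2+y3)) := by
  have h := Finset.sum_sq_le_sum_mul_sum_of_sq_eq_mul (Finset.univ : Finset (Fin 3))
    (r := ![Real.sqrt (x1*y1), Real.sqrt (x2*y2), Real.sqrt (x3*y3)])
    (f := ![x1,x2,x3]) (g := ![y1,y2,y3])
    (by intro i _; fin_cases i <;> simpa)
    (by intro i _; fin_cases i <;> simpa)
    (by intro i _; fin_cases i
        · simpa using Real.sq_sqrt (mul_nonneg hx1 hy1)
        · simpa using Real.sq_sqrt (mul_nonneg hx2 hy2)
        · simpa using Real.sq_sqrt (mul_nonneg hx3 hy3))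
  simp only [Fin.sum_univ_three, Matrix.cons_val_zero, Matrix.cons_val_one, Matrix.head_cons,
    Matrix.cons_val_two, Matrix.tail_cons] at h
  have hnn : 0 ≤ Real.sqrt (x1*y1) + Real.sqrt (x2*y2) + Real.sqrt (x3*y3) := by positivity
  rw [Real.le_sqrt hnn (by positivity)]
  exact h

lemma dot3_sub_comm (u v : V3) : dot3 (u - v) (u - v) = dot3 (v - u) (v - u) := by
  simp only [dot3, Pi.sub_apply]
  apply Finset.sum_congr rfl
  intro i _
  ring


end NNaux

open NNaux

theorem stmt9 (r s p : ℝ) (hr : 0 < r) (hs : 0 < s) :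
    Convex ℝ {z : Z | norm3 z.1 < r ∧ norm3 z.2.1 < s ∧
      nuclearNorm (M0 p z) < Gfun r s z} := by
  intro x hx y hy a b ha hb hab
  simp only [Set.mem_setOf_eq] at hx hy ⊢
  obtain ⟨hx1, hx2, hx3⟩ := hx
  obtain ⟨hy1, hy2, hy3⟩ := hy
  rcases eq_or_lt_of_le ha with hA0 | hA
  · have hb1 : b = 1 := by linarith
    rw [← hA0, hb1, zero_smul, one_smul, zero_add]
    exact ⟨hy1, hy2, hy3⟩
  rcases eq_or_lt_of_le hb with hB0 | hB
  · have ha1 : a = 1 := by linarith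
    rw [← hB0, ha1, zero_smul, one_smul, add_zero]
    exact ⟨hx1, hx2, hx3⟩
  have hz1 : (a • x + b • y).1 = a • x.1 + b • y.1 := rfl
  have hz2 : (a • x + b • y).2.1 = a • x.2.1 + b • y.2.1 := rfl
  -- basic quantities
  have hd1 : dot3 x.1 x.1 < r ^ 2 := by
    have h := sq_norm3 x.1
    have hn : 0 ≤ norm3 x.1 := Real.sqrt_nonneg _
    nlinarith [h, hn, hx1]
  have hd2 : dot3 y.1 y.1 < r ^ 2 := by
    have h := sq_norm3 y.1
    have hn : 0 ≤ norm3 y.1 := Real.sqrt_nonneg _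
    nlinarith [h, hn, hy1]
  have he1 : dot3 x.2.1 x.2.1 < s ^ 2 := by
    have h := sq_norm3 x.2.1
    have hn : 0 ≤ norm3 x.2.1 := Real.sqrt_nonneg _
    nlinarith [h, hn, hx2]
  have he2 : dot3 y.2.1 y.2.1 < s ^ 2 := by
    have h := sq_norm3 y.2.1
    have hn : 0 ≤ norm3 y.2.1 := Real.sqrt_nonneg _
    nlinarith [h, hn, hy2]
  have hA2 : 0 ≤ dot3 (y.1 - x.1) (y.1 - x.1) := dot3_self_nonneg _
  have hB2 : 0 ≤ dot3 (x.2.1 - y.2.1) (x.2.1 - y.2.1) := dot3_self_nonneg _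
  have hdot1 : dot3 (a • x.1 + b • y.1) (a • x.1 + b • y.1)
      = a * dot3 x.1 x.1 + b * dot3 y.1 y.1 - a * b * dot3 (y.1 - x.1) (y.1 - x.1) :=
    dot3_combo a b hab x.1 y.1
  have hdot2 : dot3 (a • x.2.1 + b • y.2.1) (a • x.2.1 + b • y.2.1)
      = a * dot3 x.2.1 x.2.1 + b * dot3 y.2.1 y.2.1
        - a * b * dot3 (x.2.1 - y.2.1) (x.2.1 - y.2.1) := by
    rw [dot3_combo a b hab x.2.1 y.2.1, dot3_sub_comm]
  have hfz : r ^ 2 - dot3 (a • x.1 + b • y.1) (a • x.1 + b • y.1)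
      = a * (r ^ 2 - dot3 x.1 x.1) + b * (r ^ 2 - dot3 y.1 y.1)
        + a * b * dot3 (y.1 - x.1) (y.1 - x.1) := by
    rw [hdot1]
    linear_combination (-(r ^ 2)) * hab
  have hgz : s ^ 2 - dot3 (a • x.2.1 + b • y.2.1) (a • x.2.1 + b • y.2.1)
      = a * (s ^ 2 - dot3 x.2.1 x.2.1) + b * (s ^ 2 - dot3 y.2.1 y.2.1)
        + a * b * dot3 (x.2.1 - y.2.1) (x.2.1 - y.2.1) := by
    rw [hdot2]
    linear_combination (-(s ^ 2)) * hab
  have hfzpos : 0 < r ^ 2 - dot3 (a • x.1 + b • y.1) (a • x.1 + b • y.1) := by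
    rw [hfz]
    have h1 : 0 < a * (r ^ 2 - dot3 x.1 x.1) := mul_pos hA (by linarith)
    have h2 : 0 < b * (r ^ 2 - dot3 y.1 y.1) := mul_pos hB (by linarith)
    have h3 : 0 ≤ a * b * dot3 (y.1 - x.1) (y.1 - x.1) :=
      mul_nonneg (mul_nonneg ha hb) hA2
    linarith
  have hgzpos : 0 < s ^ 2 - dot3 (a • x.2.1 + b • y.2.1) (a • x.2.1 + b • y.2.1) := by
    rw [hgz]
    have h1 : 0 < a * (s ^ 2 - dot3 x.2.1 x.2.1) := mul_pos hA (by linarith)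
    have h2 : 0 < b * (s ^ 2 - dot3 y.2.1 y.2.1) := mul_pos hB (by linarith)
    have h3 : 0 ≤ a * b * dot3 (x.2.1 - y.2.1) (x.2.1 - y.2.1) :=
      mul_nonneg (mul_nonneg ha hb) hB2
    linarith
  refine ⟨?_, ?_, ?_⟩
  · rw [hz1]
    have hlt : dot3 (a • x.1 + b • y.1) (a • x.1 + b • y.1) < r ^ 2 := by linarith
    have h := Real.sqrt_lt_sqrt (dot3_self_nonneg _) hlt
    rwa [Real.sqrt_sq hr.le] at h
  · rw [hz2]
    have hlt : dot3 (a • x.2.1 + b • y.2.1) (a • x.2.1 + b • y.2.1) < s ^ 2 := by linarith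
    have h := Real.sqrt_lt_sqrt (dot3_self_nonneg _) hlt
    rwa [Real.sqrt_sq hs.le] at h
  · -- nuclear norm bound
    have hM := M0_combo p a b hab x y
    have hbound : nuclearNorm (M0 p (a • x + b • y))
        ≤ a * nuclearNorm (M0 p x) + b * nuclearNorm (M0 p y)
          + (a * b) * (norm3 (y.1 - x.1) * norm3 (x.2.1 - y.2.1)) := by
      rw [hM]
      calc nuclearNorm (a • M0 p x + b • M0 p y
              + (a * b) • outer (y.1 - x.1) (x.2.1 - y.2.1))
          ≤ nuclearNorm (a • M0 p x + b • M0 p y)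
            + nuclearNorm ((a * b) • outer (y.1 - x.1) (x.2.1 - y.2.1)) :=
            nuclearNorm_add_le _ _
        _ ≤ nuclearNorm (a • M0 p x) + nuclearNorm (b • M0 p y)
            + nuclearNorm ((a * b) • outer (y.1 - x.1) (x.2.1 - y.2.1)) := by
            have := nuclearNorm_add_le (a • M0 p x) (b • M0 p y)
            linarith
        _ = a * nuclearNorm (M0 p x) + b * nuclearNorm (M0 p y)
            + (a * b) * (norm3 (y.1 - x.1) * norm3 (x.2.1 - y.2.1)) := by
            rw [nuclearNorm_smul a ha, nuclearNorm_smul b hb,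
              nuclearNorm_smul (a * b) (mul_nonneg ha hb), outer,
              nuclearNorm_outer]
    have hstrict : a * nuclearNorm (M0 p x) + b * nuclearNorm (M0 p y)
          + (a * b) * (norm3 (y.1 - x.1) * norm3 (x.2.1 - y.2.1))
        < a * Gfun r s x + b * Gfun r s y
          + (a * b) * (norm3 (y.1 - x.1) * norm3 (x.2.1 - y.2.1)) := by
      have h1 : a * nuclearNorm (M0 p x) < a * Gfun r s x :=
        mul_lt_mul_of_pos_left hx3 hA
      have h2 : b * nuclearNorm (M0 p y) < b * Gfun r s y :=
        mul_lt_mul_of_pos_left hy3 hB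
      linarith
    have hfinal : a * Gfun r s x + b * Gfun r s y
          + (a * b) * (norm3 (y.1 - x.1) * norm3 (x.2.1 - y.2.1))
        ≤ Gfun r s (a • x + b • y) := by
      have hGx : Gfun r s x = Real.sqrt ((r ^ 2 - dot3 x.1 x.1) * (s ^ 2 - dot3 x.2.1 x.2.1)) := by
        rw [Gfun, sq_norm3, sq_norm3]
      have hGy : Gfun r s y = Real.sqrt ((r ^ 2 - dot3 y.1 y.1) * (s ^ 2 - dot3 y.2.1 y.2.1)) := by
        rw [Gfun, sq_norm3, sq_norm3]
      have hGz : Gfun r s (a • x + b • y)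
          = Real.sqrt ((a * (r ^ 2 - dot3 x.1 x.1) + b * (r ^ 2 - dot3 y.1 y.1)
                + a * b * dot3 (y.1 - x.1) (y.1 - x.1))
              * (a * (s ^ 2 - dot3 x.2.1 x.2.1) + b * (s ^ 2 - dot3 y.2.1 y.2.1)
                + a * b * dot3 (x.2.1 - y.2.1) (x.2.1 - y.2.1))) := by
        rw [Gfun, hz1, hz2, sq_norm3, sq_norm3, hfz, hgz]
      rw [hGx, hGy, hGz]
      have hprod : norm3 (y.1 - x.1) * norm3 (x.2.1 - y.2.1)
          = Real.sqrt (dot3 (y.1 - x.1) (y.1 - x.1) * dot3 (x.2.1 - y.2.1) (x.2.1 - y.2.1)) := by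
        rw [norm3, norm3, ← Real.sqrt_mul hA2]
      rw [hprod, smul_sqrt_mul a _ _ ha, smul_sqrt_mul b _ _ hb,
        smul_sqrt_mul (a * b) _ _ (mul_nonneg ha hb)]
      exact sqrt_cs3 _ _ _ _ _ _ (mul_nonneg ha (by linarith)) (mul_nonneg hb (by linarith))
        (mul_nonneg (mul_nonneg ha hb) hA2) (mul_nonneg ha (by linarith))
        (mul_nonneg hb (by linarith)) (mul_nonneg (mul_nonneg ha hb) hB2)
    calc nuclearNorm (M0 p (a • x + b • y))
        ≤ a * nuclearNorm (M0 p x) + b * nuclearNorm (M0 p y)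
          + (a * b) * (norm3 (y.1 - x.1) * norm3 (x.2.1 - y.2.1)) := hbound
      _ < a * Gfun r s x + b * Gfun r s y
          + (a * b) * (norm3 (y.1 - x.1) * norm3 (x.2.1 - y.2.1)) := hstrict
      _ ≤ Gfun r s (a • x + b • y) := hfinal
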